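/- arXiv:1807.05473 — 2 statements merged into one kernel-verified Lean document; each statement's English description precedes it below -/
import Mathlib

section
/- Let q = r^h with r = p^m, and z = y^r - y ∈ F_q[y]. Then z is invariant under y ↦ y + α for every α ∈ F_r ⊆ F_q, and z^{r^{h-1}} + z^{r^{h-2}} + ⋯ + z = y^q - y as polynomials over F_q. -/
open Polynomial

/-- Let `q = r^h` with `r = p^m`, and `z = y^r - y`. Then `z` is invariant under
`y ↦ y + α` for every `α` in the subfield `F_r = {α : α^r = α}`, and
`z^{r^{h-1}} + z^{r^{h-2}} + ⋯ + z = y^q - y` as polynomials over `F_q`. -/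
theorem stmt8 {F : Type*} [Field F] (p m h : ℕ) [Fact p.Prime] [CharP F p]
    (hm : 0 < m) (hh : 2 ≤ h) (r : ℕ) (hr : r = p ^ m) :
    (∀ α : F, α ^ r = α →
        (X ^ r - X : Polynomial F).comp (X + C α) = X ^ r - X)
    ∧ ∑ i ∈ Finset.range h, (X ^ r - X : Polynomial F) ^ r ^ i = X ^ r ^ h - X := by
  constructor
  · intro α hα
    subst hr
    simp only [sub_comp, pow_comp, X_comp, add_pow_char_pow]
    rw [← C_pow, hα]
    ring
  · have key : ∀ i : ℕ, (X ^ r - X : Polynomial F) ^ r ^ i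
        = X ^ r ^ (i + 1) - X ^ r ^ i := by
      intro i
      subst hr
      rw [← pow_mul, sub_pow_char_pow, ← pow_mul]
      congr 2
      rw [← pow_add]
      ring_nf
    calc ∑ i ∈ Finset.range h, (X ^ r - X : Polynomial F) ^ r ^ i
        = ∑ i ∈ Finset.range h, ((X : Polynomial F) ^ r ^ (i + 1) - X ^ r ^ i) := by
          simp [key]
      _ = X ^ r ^ h - X ^ r ^ 0 := Finset.sum_range_sub (fun i => X ^ r ^ i) h
      _ = X ^ r ^ h - X := by simp
end

section
/- Let q₀ ≥ 2 and let g_j denote the genus of the j-th Garcia–Stichtenoth curve, satisfying g_j ≤ n_j/(q₀-1) where n_j = q₀^{j-1}(q₀²-1). Then for n = q₀^{j+1}(q₀²-1), k = (ℓ - g_j + 1)(q₀-1)², and d = n - ℓq₀² - 2q₀^{j+1}(q₀-2), the inequality d/n + (k/n)·q₀²/(q₀-1)² ≥ 1 - 3/(q₀+1) + q₀²/n holds. -/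
/-!
Writing `n = P q₀² (q₀² - 1)` with `P = q₀^{j-1}`, the parameter `ℓ` cancels between `d` and `k`,
and the difference of the two sides is `(P (q₀ + 1) - g) / (P (q₀² - 1))`. Since
`n_j / (q₀ - 1) = P (q₀ + 1)`, the genus bound is exactly what makes this nonnegative.
-/

lemma rate_add_distance_sub_eq (Q P g ℓ : ℝ) (hQ : 1 < Q) (hP : P ≠ 0) :
    (P * Q ^ 2 * (Q ^ 2 - 1) - ℓ * Q ^ 2 - 2 * (P * Q ^ 2) * (Q - 2)) / (P * Q ^ 2 * (Q ^ 2 - 1))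
      + (ℓ - g + 1) * (Q - 1) ^ 2 / (P * Q ^ 2 * (Q ^ 2 - 1)) * (Q ^ 2 / (Q - 1) ^ 2)
      - (1 - 3 / (Q + 1) + Q ^ 2 / (P * Q ^ 2 * (Q ^ 2 - 1)))
      = (P * (Q + 1) - g) / (P * (Q ^ 2 - 1)) := by
  have hQ₁ : Q - 1 ≠ 0 := by linarith
  have hQ₂ : Q + 1 ≠ 0 := by linarith
  have hQ₃ : Q ^ 2 - 1 ≠ 0 := by nlinarith
  have hQ₀ : Q ≠ 0 := by linarith
  field_simp
  ring

lemma one_sub_three_div_add_le_rate_add_distance (Q P g ℓ : ℝ) (hQ : 1 < Q) (hP : 0 < P)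
    (hg : g ≤ P * (Q + 1)) :
    1 - 3 / (Q + 1) + Q ^ 2 / (P * Q ^ 2 * (Q ^ 2 - 1)) ≤
      (P * Q ^ 2 * (Q ^ 2 - 1) - ℓ * Q ^ 2 - 2 * (P * Q ^ 2) * (Q - 2)) / (P * Q ^ 2 * (Q ^ 2 - 1))
        + (ℓ - g + 1) * (Q - 1) ^ 2 / (P * Q ^ 2 * (Q ^ 2 - 1)) * (Q ^ 2 / (Q - 1) ^ 2) := by
  rw [← sub_nonneg, rate_add_distance_sub_eq Q P g ℓ hQ hP.ne']
  have hQ₂ : 0 < Q ^ 2 - 1 := by nlinarith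
  exact div_nonneg (sub_nonneg.mpr hg) (by positivity)

theorem stmt11_general (q₀ j : ℕ) (hq : 2 ≤ q₀) (hj : 1 ≤ j) (g ℓ : ℝ)
    (hg : g ≤ (q₀ : ℝ) ^ (j - 1) * ((q₀ : ℝ) ^ 2 - 1) / ((q₀ : ℝ) - 1)) :
    ((q₀ : ℝ) ^ (j + 1) * ((q₀ : ℝ) ^ 2 - 1) - ℓ * (q₀ : ℝ) ^ 2
          - 2 * (q₀ : ℝ) ^ (j + 1) * ((q₀ : ℝ) - 2))
        / ((q₀ : ℝ) ^ (j + 1) * ((q₀ : ℝ) ^ 2 - 1))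
      + (ℓ - g + 1) * ((q₀ : ℝ) - 1) ^ 2 / ((q₀ : ℝ) ^ (j + 1) * ((q₀ : ℝ) ^ 2 - 1))
          * ((q₀ : ℝ) ^ 2 / ((q₀ : ℝ) - 1) ^ 2)
      ≥ 1 - 3 / ((q₀ : ℝ) + 1)
        + (q₀ : ℝ) ^ 2 / ((q₀ : ℝ) ^ (j + 1) * ((q₀ : ℝ) ^ 2 - 1)) := by
  have hQ : (1 : ℝ) < q₀ := by exact_mod_cast hq
  have hpow : (q₀ : ℝ) ^ (j + 1) = (q₀ : ℝ) ^ (j - 1) * (q₀ : ℝ) ^ 2 := by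
    rw [← pow_add]
    congr 1
    omega
  have hgenus : g ≤ (q₀ : ℝ) ^ (j - 1) * ((q₀ : ℝ) + 1) := by
    have hQ₁ : (q₀ : ℝ) - 1 ≠ 0 := by linarith
    refine hg.trans_eq ?_
    field_simp
    ring
  rw [hpow]
  exact one_sub_three_div_add_le_rate_add_distance _ _ g ℓ hQ (by positivity) hgenus

/-- Rate–distance estimate for codes from the Garcia–Stichtenoth tower: with
`n_j = q₀^{j-1}(q₀²-1)`, `g_j ≤ n_j/(q₀-1)`, `g_j ≤ ℓ ≤ n_j`, `n = q₀^{j+1}(q₀²-1)`,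
`k = (ℓ - g_j + 1)(q₀-1)²` and `d = n - ℓq₀² - 2q₀^{j+1}(q₀-2)`, one has
`d/n + (k/n)·q₀²/(q₀-1)² ≥ 1 - 3/(q₀+1) + q₀²/n`. -/
theorem stmt11 (q₀ j : ℕ) (hq : 2 ≤ q₀) (hj : 1 ≤ j) (g ℓ : ℝ)
    (hg : g ≤ (q₀ : ℝ) ^ (j - 1) * ((q₀ : ℝ) ^ 2 - 1) / ((q₀ : ℝ) - 1))
    (hℓ₁ : g ≤ ℓ) (hℓ₂ : ℓ ≤ (q₀ : ℝ) ^ (j - 1) * ((q₀ : ℝ) ^ 2 - 1)) :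
    ((q₀ : ℝ) ^ (j + 1) * ((q₀ : ℝ) ^ 2 - 1) - ℓ * (q₀ : ℝ) ^ 2
          - 2 * (q₀ : ℝ) ^ (j + 1) * ((q₀ : ℝ) - 2))
        / ((q₀ : ℝ) ^ (j + 1) * ((q₀ : ℝ) ^ 2 - 1))
      + (ℓ - g + 1) * ((q₀ : ℝ) - 1) ^ 2 / ((q₀ : ℝ) ^ (j + 1) * ((q₀ : ℝ) ^ 2 - 1))
          * ((q₀ : ℝ) ^ 2 / ((q₀ : ℝ) - 1) ^ 2)
      ≥ 1 - 3 / ((q₀ : ℝ) + 1)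
        + (q₀ : ℝ) ^ 2 / ((q₀ : ℝ) ^ (j + 1) * ((q₀ : ℝ) ^ 2 - 1)) :=
  stmt11_general q₀ j hq hj g ℓ hg
end
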